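/- arXiv:1411.5216 — 5 statements merged into one kernel-verified Lean document; each statement's English description precedes it below -/
import Mathlib

section
/- The integral over the triangle {(x,y) : 0<x<π, 0<y<π, x+y<π} of 8·sin(x)·sin(y)·sin(x+y)/(sin(x)+sin(y)+sin(x+y))^3 equals 1. -/
open MeasureTheory Real

open Filter Topology Set

/-!
The triangle is the region under the graph of `x ↦ π - x` over `(0, π)`, so by Fubini the
integral is an iterated integral. In the half-angle tangents `s = tan (x / 2)`, `t = tan (y / 2)`
the density becomes the rational function `s t (1 - s t) (1 + s²) (1 + t²) / (s + t)²`, and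
`dy = 2 dt / (1 + t²)`. The inner integral, over `0 < t < 1 / s`, is then elementary, and so is an
antiderivative of the result in `x`; it vanishes as `x → 0` and tends to `1` as `x → π`, by the
expansion `log (1 + r) = r - r² / 2 + O(r³)` in `r = s⁻²`.
-/

section regionBetween

variable {α E : Type*} [NormedAddCommGroup E] [NormedSpace ℝ E] {f g : α → ℝ} {s : Set α}
  {F : α × ℝ → E}

lemma integral_indicator_regionBetween_slice (x : α) :
    ∫ y, (regionBetween f g s).indicator F (x, y) =
      s.indicator (fun x ↦ ∫ y in Ioo (f x) (g x), F (x, y)) x := by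
  by_cases hx : x ∈ s
  · rw [indicator_of_mem hx, ← integral_indicator measurableSet_Ioo]
    congr 1 with y
    simp only [indicator, regionBetween, mem_ofPred_eq, hx, true_and]
  · rw [indicator_of_notMem hx]
    simp [indicator, regionBetween, hx]

variable [MeasurableSpace α] {μ : Measure α}

lemma integrableOn_integral_regionBetween (hf : Measurable f) (hg : Measurable g)
    (hs : MeasurableSet s) (hF : IntegrableOn F (regionBetween f g s) (μ.prod volume)) :
    IntegrableOn (fun x ↦ ∫ y in Ioo (f x) (g x), F (x, y)) s μ := by
  rw [← integrable_indicator_iff hs]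
  have := ((integrable_indicator_iff (measurableSet_regionBetween hf hg hs)).2 hF).integral_prod_left
  simpa only [integral_indicator_regionBetween_slice] using this

lemma setIntegral_regionBetween [SFinite μ] (hf : Measurable f) (hg : Measurable g)
    (hs : MeasurableSet s) (hF : IntegrableOn F (regionBetween f g s) (μ.prod volume)) :
    ∫ p in regionBetween f g s, F p ∂μ.prod volume =
      ∫ x in s, (∫ y in Ioo (f x) (g x), F (x, y)) ∂μ := by
  rw [← integral_indicator (measurableSet_regionBetween hf hg hs),
    integral_prod _ ((integrable_indicator_iff (measurableSet_regionBetween hf hg hs)).2 hF),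
    ← integral_indicator hs]
  simp only [integral_indicator_regionBetween_slice]

end regionBetween

lemma integral_Ioo_eq_sub_of_hasDerivAt_of_tendsto {f f' : ℝ → ℝ} {a b fa fb : ℝ} (hab : a < b)
    (hderiv : ∀ x ∈ Ioo a b, HasDerivAt f (f' x) x) (hint : IntegrableOn f' (Ioo a b))
    (ha : Tendsto f (𝓝[>] a) (𝓝 fa)) (hb : Tendsto f (𝓝[<] b) (𝓝 fb)) :
    ∫ x in Ioo a b, f' x = fb - fa := by
  rw [← integral_Ioc_eq_integral_Ioo, ← intervalIntegral.integral_of_le hab.le]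
  exact intervalIntegral.integral_eq_sub_of_hasDerivAt_of_tendsto hab hderiv
    ((intervalIntegrable_iff_integrableOn_Ioo_of_le hab.le).2 hint) ha hb

lemma tendsto_log_one_add_sub_self_div_sq :
    Tendsto (fun r ↦ (log (1 + r) - r) / r ^ 2) (𝓝[≠] 0) (𝓝 (-1 / 2)) := by
  have hbound : Tendsto (fun r : ℝ ↦ |r| / (1 - |r|)) (𝓝[≠] 0) (𝓝 0) := by
    have : ContinuousAt (fun r : ℝ ↦ |r| / (1 - |r|)) 0 := by fun_prop (disch := norm_num)
    simpa using this.tendsto.mono_left nhdsWithin_le_nhds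
  suffices h : Tendsto (fun r ↦ (log (1 + r) - r + r ^ 2 / 2) / r ^ 2) (𝓝[≠] 0) (𝓝 0) by
    have := h.add_const (-1 / 2)
    rw [zero_add] at this
    refine this.congr' ?_
    filter_upwards [self_mem_nhdsWithin] with r (hr : r ≠ 0)
    field_simp
    ring
  refine squeeze_zero_norm' ?_ hbound
  filter_upwards [self_mem_nhdsWithin, nhdsWithin_le_nhds (Ioo_mem_nhds neg_one_lt_zero one_pos)]
    with r (hr : r ≠ 0) hr₁
  have hr₁ : |r| < 1 := abs_lt.2 hr₁
  have htaylor := abs_log_sub_add_sum_range_le (x := -r) (by rwa [abs_neg]) 2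
  simp only [Finset.sum_range_succ, Finset.sum_range_zero, abs_neg, sub_neg_eq_add] at htaylor
  norm_num at htaylor
  rw [norm_div, norm_pow, norm_eq_abs, div_le_iff₀ (by positivity)]
  calc |log (1 + r) - r + r ^ 2 / 2| ≤ |r| ^ 3 / (1 - |r|) := by convert htaylor using 2; ring
    _ = |r| / (1 - |r|) * |r| ^ 2 := by ring

lemma cos_ne_neg_one_of_cos_half_ne_zero {x : ℝ} (h : cos (x / 2) ≠ 0) : cos x ≠ -1 := by
  rw [← mul_div_cancel₀ x (two_ne_zero' ℝ), cos_two_mul]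
  intro h'
  exact h (pow_eq_zero_iff two_ne_zero |>.1 (by linarith))

lemma hasDerivAt_tan_half {y : ℝ} (h : cos (y / 2) ≠ 0) :
    HasDerivAt (fun y ↦ tan (y / 2)) ((1 + tan (y / 2) ^ 2) / 2) y := by
  refine ((hasDerivAt_tan h).comp y ((hasDerivAt_id y).div_const 2)).congr_deriv ?_
  rw [← inv_one_add_tan_sq h, one_div, inv_inv]
  ring

lemma sin_add_eq_tan_half {x y : ℝ} (hx : cos x ≠ -1) (hy : cos y ≠ -1) :
    sin (x + y) = 2 * (tan (x / 2) + tan (y / 2)) * (1 - tan (x / 2) * tan (y / 2)) /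
      ((1 + tan (x / 2) ^ 2) * (1 + tan (y / 2) ^ 2)) := by
  rw [sin_add, sin_eq_two_mul_tan_half_div_one_add_tan_half_sq x,
    sin_eq_two_mul_tan_half_div_one_add_tan_half_sq y,
    cos_eq_two_mul_tan_half_div_one_sub_tan_half_sq x hx,
    cos_eq_two_mul_tan_half_div_one_sub_tan_half_sq y hy]
  field_simp
  ring

lemma setOf_angles_eq_regionBetween :
    {p : ℝ × ℝ | 0 < p.1 ∧ p.1 < π ∧ 0 < p.2 ∧ p.2 < π ∧ p.1 + p.2 < π} =
      regionBetween 0 (fun x ↦ π - x) (Ioo 0 π) := by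
  ext ⟨x, y⟩
  simp only [regionBetween, mem_ofPred_eq, mem_Ioo, Pi.zero_apply]
  constructor
  · rintro ⟨hx₀, hxπ, hy₀, -, hxy⟩
    exact ⟨⟨hx₀, hxπ⟩, hy₀, by linarith⟩
  · rintro ⟨⟨hx₀, hxπ⟩, hy₀, hxy⟩
    exact ⟨hx₀, hxπ, hy₀, by linarith, by linarith⟩

noncomputable def angleDensity (x y : ℝ) : ℝ :=
  8 * sin x * sin y * sin (x + y) / (sin x + sin y + sin (x + y)) ^ 3

lemma angleDensity_eq_tan_half {x y : ℝ} (hx : cos x ≠ -1) (hy : cos y ≠ -1) :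
    angleDensity x y = tan (x / 2) * tan (y / 2) * (1 - tan (x / 2) * tan (y / 2)) *
      ((1 + tan (x / 2) ^ 2) * (1 + tan (y / 2) ^ 2)) / (tan (x / 2) + tan (y / 2)) ^ 2 := by
  rw [angleDensity, sin_add_eq_tan_half hx hy, sin_eq_two_mul_tan_half_div_one_add_tan_half_sq x,
    sin_eq_two_mul_tan_half_div_one_add_tan_half_sq y]
  set s := tan (x / 2)
  set t := tan (y / 2)
  rcases eq_or_ne (s + t) 0 with hst | hst
  -- then `sin (x + y) = 0` kills the left side, and the right side divides by `0`
  · simp [hst]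
  · have hs : 1 + s ^ 2 ≠ 0 := by positivity
    have ht : 1 + t ^ 2 ≠ 0 := by positivity
    have hden : 2 * s / (1 + s ^ 2) + 2 * t / (1 + t ^ 2) +
        2 * (s + t) * (1 - s * t) / ((1 + s ^ 2) * (1 + t ^ 2)) =
        4 * (s + t) / ((1 + s ^ 2) * (1 + t ^ 2)) := by
      field_simp
      ring
    rw [hden]
    field_simp
    ring

lemma abs_angleDensity_le {x y : ℝ} (hx : 0 ≤ sin x) (hy : 0 ≤ sin y) (hxy : 0 ≤ sin (x + y)) :
    |angleDensity x y| ≤ 8 / 27 := by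
  rw [angleDensity, abs_of_nonneg (by positivity)]
  refine div_le_of_le_mul₀ (by positivity) (by norm_num) ?_
  nlinarith [mul_nonneg hx (sq_nonneg (sin y - sin (x + y))),
    mul_nonneg hy (sq_nonneg (sin x - sin (x + y))), mul_nonneg hxy (sq_nonneg (sin x - sin y)),
    mul_nonneg (mul_nonneg hx hy) hxy]

lemma integrableOn_angleDensity :
    IntegrableOn (fun p : ℝ × ℝ ↦ angleDensity p.1 p.2)
      (regionBetween 0 (fun x ↦ π - x) (Ioo 0 π)) (volume.prod volume) := by
  have hmeas : MeasurableSet (regionBetween 0 (fun x ↦ π - x) (Ioo 0 π)) :=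
    measurableSet_regionBetween measurable_zero (by fun_prop) measurableSet_Ioo
  refine Measure.integrableOn_of_bounded (M := 8 / 27) ?_ ?_ ?_
  · rw [← Measure.volume_eq_prod]
    refine ((Metric.isBounded_Icc ((0 : ℝ), (0 : ℝ)) (π, π)).subset ?_).measure_lt_top.ne
    rintro ⟨x, y⟩ ⟨hx, hy⟩
    simp only [Pi.zero_apply] at hy
    exact ⟨⟨hx.1.le, hy.1.le⟩, ⟨hx.2.le, by linarith [hx.1, hy.2]⟩⟩
  · exact (Measurable.div (by fun_prop) (by fun_prop)).aestronglyMeasurable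
  · refine ae_restrict_of_forall_mem hmeas ?_
    rintro ⟨x, y⟩ ⟨⟨hx₀, hxπ⟩, hy₀, hxy⟩
    dsimp only [Pi.zero_apply] at hx₀ hxπ hy₀ hxy
    exact abs_angleDensity_le (sin_nonneg_of_nonneg_of_le_pi hx₀.le hxπ.le)
      (sin_nonneg_of_nonneg_of_le_pi hy₀.le (by linarith))
      (sin_nonneg_of_nonneg_of_le_pi (by linarith) (by linarith))

noncomputable def innerPrimitive (s t : ℝ) : ℝ :=
  -s ^ 2 * (s + t) + (s + 2 * s ^ 3) * log (s + t) + s ^ 2 * (1 + s ^ 2) / (s + t)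

lemma hasDerivAt_innerPrimitive (s : ℝ) {t : ℝ} (h : s + t ≠ 0) :
    HasDerivAt (innerPrimitive s) (s * t * (1 - s * t) / (s + t) ^ 2) t := by
  have hsum : HasDerivAt (fun t ↦ s + t) 1 t := (hasDerivAt_id t).const_add s
  have := ((hsum.const_mul (-s ^ 2)).add ((hsum.log h).const_mul (s + 2 * s ^ 3))).add
    ((hasDerivAt_const t (s ^ 2 * (1 + s ^ 2))).div hsum h)
  refine this.congr_deriv ?_
  field_simp
  ring

lemma hasDerivAt_innerPrimitive_tan_half {x y : ℝ} (hx : cos x ≠ -1) (hy : cos (y / 2) ≠ 0)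
    (hxy : tan (x / 2) + tan (y / 2) ≠ 0) :
    HasDerivAt (fun y ↦ 2 * (1 + tan (x / 2) ^ 2) * innerPrimitive (tan (x / 2)) (tan (y / 2)))
      (angleDensity x y) y := by
  refine (((hasDerivAt_innerPrimitive _ hxy).comp y (hasDerivAt_tan_half hy)).const_mul
    (2 * (1 + tan (x / 2) ^ 2))).congr_deriv ?_
  rw [angleDensity_eq_tan_half hx (cos_ne_neg_one_of_cos_half_ne_zero hy)]
  ring

lemma innerPrimitive_inv_sub_zero {s : ℝ} (hs : s ≠ 0) :
    innerPrimitive s s⁻¹ - innerPrimitive s 0 = (s + 2 * s ^ 3) * log (1 + (s ^ 2)⁻¹) - 2 * s := by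
  have hs' : s + s⁻¹ ≠ 0 := by
    rw [← mul_ne_zero_iff_left hs]
    field_simp
    positivity
  have hlog : log (1 + (s ^ 2)⁻¹) = log (s + s⁻¹) - log s := by
    rw [← log_div hs' hs]
    congr 1
    field_simp
  have h₁ : s ^ 2 * (1 + s ^ 2) / (s + s⁻¹) = s ^ 3 := by
    field_simp
    ring
  have h₂ : s ^ 2 * (1 + s ^ 2) / s = s * (1 + s ^ 2) := by
    field_simp
  have h₃ : s ^ 2 * s⁻¹ = s := by
    field_simp
  simp only [innerPrimitive, add_zero, h₁, h₂, hlog]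
  linear_combination (-1) * h₃

lemma integral_angleDensity_slice {x : ℝ} (hx₀ : 0 < x) (hxπ : x < π) :
    ∫ y in Ioo 0 (π - x), angleDensity x y =
      2 * (1 + tan (x / 2) ^ 2) *
        ((tan (x / 2) + 2 * tan (x / 2) ^ 3) * log (1 + (tan (x / 2) ^ 2)⁻¹) - 2 * tan (x / 2)) := by
  have hs : 0 < tan (x / 2) := tan_pos_of_pos_of_lt_pi_div_two (by linarith) (by linarith)
  have hx : cos x ≠ -1 :=
    cos_ne_neg_one_of_cos_half_ne_zero (cos_pos_of_mem_Ioo ⟨by linarith, by linarith⟩).ne'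
  rw [← integral_Ioc_eq_integral_Ioo, ← intervalIntegral.integral_of_le (by linarith),
    intervalIntegral.integral_eq_sub_of_hasDerivAt
    (f := fun y ↦ 2 * (1 + tan (x / 2) ^ 2) * innerPrimitive (tan (x / 2)) (tan (y / 2)))
    (fun y hy ↦ ?deriv) ?int]
  · rw [← mul_sub, sub_div, tan_pi_div_two_sub, zero_div, tan_zero,
      innerPrimitive_inv_sub_zero hs.ne']
  case deriv =>
    rw [uIcc_of_le (by linarith)] at hy
    have ht : 0 ≤ tan (y / 2) :=
      tan_nonneg_of_nonneg_of_le_pi_div_two (by linarith [hy.1]) (by linarith [hy.2])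
    exact hasDerivAt_innerPrimitive_tan_half hx
      (cos_pos_of_mem_Ioo ⟨by linarith [hy.1], by linarith [hy.2]⟩).ne' (by positivity)
  case int =>
    refine ContinuousOn.intervalIntegrable (ContinuousOn.div (by fun_prop) (by fun_prop) ?_)
    intro y hy
    rw [uIcc_of_le (by linarith)] at hy
    have := sin_pos_of_pos_of_lt_pi hx₀ hxπ
    have := sin_nonneg_of_nonneg_of_le_pi hy.1 (by linarith [hy.2])
    have := sin_nonneg_of_nonneg_of_le_pi (by linarith [hy.1]) (by linarith [hy.2] : x + y ≤ π)
    positivity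

noncomputable def outerPrimitive (s : ℝ) : ℝ :=
  2 * s ^ 2 * (1 + s ^ 2) * log (1 + (s ^ 2)⁻¹) - 2 * s ^ 2

lemma hasDerivAt_outerPrimitive {s : ℝ} (hs : s ≠ 0) :
    HasDerivAt outerPrimitive (4 * ((s + 2 * s ^ 3) * log (1 + (s ^ 2)⁻¹) - 2 * s)) s := by
  have hsq : HasDerivAt (fun s : ℝ ↦ s ^ 2) (2 * s) s := by
    simpa using hasDerivAt_pow 2 s
  have hlog := ((hsq.fun_inv (pow_ne_zero 2 hs)).const_add 1).log (by positivity)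
  refine ((((hsq.const_mul 2).mul (hsq.const_add 1)).mul hlog).sub
    (hsq.const_mul 2)).congr_deriv ?_
  simp only [Pi.mul_apply]
  field_simp
  ring

lemma outerPrimitive_eq (s : ℝ) :
    outerPrimitive s =
      2 * (1 + s ^ 2) * (s ^ 2 * log (1 + s ^ 2) - s ^ 2 * log (s ^ 2)) - 2 * s ^ 2 := by
  rcases eq_or_ne s 0 with rfl | hs
  · simp [outerPrimitive]
  · have hlog : log (1 + (s ^ 2)⁻¹) = log (1 + s ^ 2) - log (s ^ 2) := by
      rw [← log_div (by positivity) (by positivity)]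
      congr 1
      field_simp
      ring
    rw [outerPrimitive, hlog]
    ring

lemma continuous_outerPrimitive : Continuous outerPrimitive := by
  have h₁ : Continuous fun s : ℝ ↦ s ^ 2 * log (s ^ 2) := continuous_mul_log.comp (continuous_pow 2)
  have h₂ : Continuous fun s : ℝ ↦ log (1 + s ^ 2) :=
    (continuous_const.add (continuous_pow 2)).log fun s ↦ (by positivity : (0 : ℝ) < 1 + s ^ 2).ne'
  rw [funext outerPrimitive_eq]
  fun_prop

lemma tendsto_outerPrimitive_atTop : Tendsto outerPrimitive atTop (𝓝 1) := by
  have hr : Tendsto (fun s : ℝ ↦ (s ^ 2)⁻¹) atTop (𝓝[≠] 0) :=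
    (tendsto_inv_atTop_nhdsGT_zero.comp (tendsto_pow_atTop two_ne_zero)).mono_right
      (nhdsWithin_mono _ fun _ h ↦ ne_of_gt h)
  have hlim : Tendsto (fun r ↦ 2 * (1 + r) * ((log (1 + r) - r) / r ^ 2) + 2) (𝓝[≠] 0) (𝓝 1) := by
    have h1 : Tendsto (fun r : ℝ ↦ 1 + r) (𝓝[≠] 0) (𝓝 1) := by
      simpa using (tendsto_const_nhds.add tendsto_id).mono_left (nhdsWithin_le_nhds (a := (0:ℝ)))
    convert ((h1.const_mul 2).mul tendsto_log_one_add_sub_self_div_sq).add_const 2 using 2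
    norm_num
  refine (hlim.comp hr).congr' ?_
  filter_upwards [eventually_ne_atTop 0] with s hs
  simp only [Function.comp_apply, outerPrimitive]
  field_simp
  ring

lemma hasDerivAt_outerPrimitive_tan_half {x : ℝ} (hx₀ : 0 < x) (hxπ : x < π) :
    HasDerivAt (fun x ↦ outerPrimitive (tan (x / 2)))
      (∫ y in Ioo 0 (π - x), angleDensity x y) x := by
  have hs : 0 < tan (x / 2) := tan_pos_of_pos_of_lt_pi_div_two (by linarith) (by linarith)
  rw [integral_angleDensity_slice hx₀ hxπ]
  refine ((hasDerivAt_outerPrimitive hs.ne').comp x (hasDerivAt_tan_half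
    (cos_pos_of_mem_Ioo ⟨by linarith, by linarith⟩).ne')).congr_deriv ?_
  ring

lemma tendsto_outerPrimitive_tan_half_zero :
    Tendsto (fun x ↦ outerPrimitive (tan (x / 2))) (𝓝[>] 0) (𝓝 0) := by
  have : ContinuousAt (fun x ↦ outerPrimitive (tan (x / 2))) 0 :=
    continuous_outerPrimitive.continuousAt.comp
      ((continuousAt_tan.2 (by simp)).comp (continuous_id.div_const 2).continuousAt)
  simpa [outerPrimitive] using this.tendsto.mono_left nhdsWithin_le_nhds

lemma tendsto_outerPrimitive_tan_half_pi :
    Tendsto (fun x ↦ outerPrimitive (tan (x / 2))) (𝓝[<] π) (𝓝 1) := by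
  have hhalf : Tendsto (fun x : ℝ ↦ x / 2) (𝓝[<] π) (𝓝[<] (π / 2)) := by
    refine tendsto_nhdsWithin_iff.2 ⟨((continuous_id.div_const 2).tendsto π).mono_left
      nhdsWithin_le_nhds, ?_⟩
    filter_upwards [self_mem_nhdsWithin] with x (hx : x < π)
    exact div_lt_div_of_pos_right hx two_pos
  exact tendsto_outerPrimitive_atTop.comp (tendsto_tan_pi_div_two.comp hhalf)

/-- The bivariate angle density for triangles from breaking a stick into three
pieces integrates to 1 over its support. -/
theorem angle_density_integrates_to_one :
    ∫ p in {p : ℝ × ℝ | 0 < p.1 ∧ p.1 < π ∧ 0 < p.2 ∧ p.2 < π ∧ p.1 + p.2 < π},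
      8 * sin p.1 * sin p.2 * sin (p.1 + p.2) /
        (sin p.1 + sin p.2 + sin (p.1 + p.2)) ^ 3 = 1 := by
  rw [setOf_angles_eq_regionBetween]
  change ∫ p in regionBetween 0 (fun x ↦ π - x) (Ioo 0 π), angleDensity p.1 p.2 = 1
  rw [Measure.volume_eq_prod,
    setIntegral_regionBetween measurable_zero (by fun_prop) measurableSet_Ioo
      integrableOn_angleDensity]
  exact (integral_Ioo_eq_sub_of_hasDerivAt_of_tendsto pi_pos
    (fun x hx ↦ hasDerivAt_outerPrimitive_tan_half hx.1 hx.2)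
    (integrableOn_integral_regionBetween measurable_zero (by fun_prop) measurableSet_Ioo
      integrableOn_angleDensity)
    tendsto_outerPrimitive_tan_half_zero tendsto_outerPrimitive_tan_half_pi).trans (sub_zero 1)
end

section
/- The area of the region {(x,y) : 0<x, 0<y, |x-y| < sqrt(1-x²-y²) < x+y} equals √3·π/18; consequently, if (u,v) is uniform on the simplex {u,v>0, u+v<1} and a=√u, b=√v, c=√(1-u-v), the probability that a,b,c satisfy the triangle inequalities is √3·π/9. -/
/-!
Squaring turns the triangle inequalities `|a - b| < c < a + b` into `(a - b)² < c² < (a + b)²`.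
For `c² = 1 - x² - y²` this says `(2y - x)² < 2 - 3x² < (2y + x)²`, so the vertical slice of the
first region over `x` is `|x - w| / 2 < y < (x + w) / 2` with `w = √(2 - 3x²)`, of length
`min x w`. For `a² = u`, `b² = v`, `c² = 1 - u - v` it says `(2v - (1 - u))² < 2u - 3u²`: the
second region is the inside of an ellipse, with slices of length `√(2u - 3u²)`. Under the
substitution `x = r sin θ` both areas become integrals of `cos² θ`: over `[π/3, π/2]` (plus a
right triangle of area `1/4`) for the first region, over `[-π/2, π/2]` for the second.
-/

open MeasureTheory Real Set intervalIntegral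

theorem abs_sub_lt_sqrt_and_sqrt_lt_add_iff {a b t : ℝ} (h : 0 < a + b) :
    |a - b| < √t ∧ √t < a + b ↔ (a - b) ^ 2 < t ∧ t < (a + b) ^ 2 := by
  rw [Real.lt_sqrt (abs_nonneg _), sq_abs, Real.sqrt_lt' h]

theorem sub_sq_lt_and_lt_add_sq_iff {a b t : ℝ} (h : 0 ≤ a * b) :
    (a - b) ^ 2 < t ∧ t < (a + b) ^ 2 ↔ (t - a ^ 2 - b ^ 2) ^ 2 < (2 * a * b) ^ 2 := by
  rw [sq_lt_sq, abs_of_nonneg (by linarith : 0 ≤ 2 * a * b), abs_lt]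
  constructor <;> rintro ⟨h₁, h₂⟩ <;> constructor <;> nlinarith

theorem sq_two_mul_sub_lt_iff {y p q : ℝ} :
    (2 * y - p) ^ 2 < q ↔ (p - √q) / 2 < y ∧ y < (p + √q) / 2 := by
  rw [← sq_abs, ← Real.lt_sqrt (abs_nonneg _), abs_lt]
  constructor <;> rintro ⟨h₁, h₂⟩ <;> constructor <;> linarith

theorem volume_regionBetween_Ioo {f g : ℝ → ℝ} {a b : ℝ} (hab : a ≤ b)
    (hf : IntervalIntegrable f volume a b) (hg : IntervalIntegrable g volume a b)
    (hfg : ∀ x ∈ Ioo a b, f x ≤ g x) :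
    volume (regionBetween f g (Ioo a b)) = ENNReal.ofReal (∫ x in a..b, g x - f x) := by
  rw [Measure.volume_eq_prod, volume_regionBetween_eq_integral
    ((intervalIntegrable_iff_integrableOn_Ioo_of_le hab).mp hf)
    ((intervalIntegrable_iff_integrableOn_Ioo_of_le hab).mp hg) measurableSet_Ioo hfg,
    integral_of_le hab, integral_Ioc_eq_integral_Ioo]
  rfl

theorem integral_sqrt_sq_sub_sq {r α β : ℝ} (hr : 0 ≤ r) (hα : α ∈ Icc (-(π / 2)) (π / 2))
    (hβ : β ∈ Icc (-(π / 2)) (π / 2)) :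
    ∫ x in r * sin α..r * sin β, √(r ^ 2 - x ^ 2)
      = r ^ 2 * (β - α + sin β * cos β - sin α * cos α) / 2 :=
  calc ∫ x in r * sin α..r * sin β, √(r ^ 2 - x ^ 2)
      = ∫ θ in α..β, √(r ^ 2 - (r * sin θ) ^ 2) * (r * cos θ) :=
        (integral_comp_mul_deriv (fun θ _ => (hasDerivAt_sin θ).const_mul r)
          (by fun_prop : Continuous fun θ => r * cos θ).continuousOn (by fun_prop)).symm
    _ = ∫ θ in α..β, r ^ 2 * cos θ ^ 2 := by
        refine integral_congr fun θ hθ => ?_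
        have hcos : 0 ≤ r * cos θ :=
          mul_nonneg hr (cos_nonneg_of_mem_Icc (uIcc_subset_Icc hα hβ hθ))
        rw [show r ^ 2 - (r * sin θ) ^ 2 = (r * cos θ) ^ 2 by
            linear_combination -r ^ 2 * sin_sq_add_cos_sq θ,
          Real.sqrt_sq hcos]
        ring
    _ = _ := by rw [intervalIntegral.integral_const_mul, integral_cos_sq]; ring

theorem integral_min_id_sqrt_two_sub_three_mul_sq :
    ∫ x in (0 : ℝ)..√(2 / 3), min x √(2 - 3 * x ^ 2) = √3 * π / 18 := by
  set k := √(2 / 3)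
  have hk0 : 0 ≤ k := Real.sqrt_nonneg _
  have hk : k ^ 2 = 2 / 3 := Real.sq_sqrt (by norm_num)
  have h3 : √3 ^ 2 = 3 := Real.sq_sqrt (by norm_num)
  set p := k * (√3 / 2)
  have hp : p ^ 2 = 1 / 2 := by rw [mul_pow, hk, div_pow, h3]; norm_num
  have hp0 : 0 ≤ p := by positivity
  have hpk : p ≤ k := mul_le_of_le_one_right hk0 (by nlinarith [Real.sqrt_nonneg 3])
  have htriangle : ∫ x in (0 : ℝ)..p, min x √(2 - 3 * x ^ 2) = 1 / 4 := by
    rw [integral_congr (g := fun x => x), integral_id, hp]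
    · norm_num
    intro x hx
    rw [uIcc_of_le hp0] at hx
    have hx2 : x ^ 2 ≤ 1 / 2 := hp ▸ pow_le_pow_left₀ hx.1 hx.2 2
    exact min_eq_left ((le_abs_self x).trans (Real.abs_le_sqrt (by linarith)))
  have hsector := integral_sqrt_sq_sub_sq hk0 (α := π / 3) (β := π / 2)
    ⟨by linarith [pi_pos], by linarith [pi_pos]⟩ ⟨by linarith [pi_pos], le_rfl⟩
  rw [sin_pi_div_two, cos_pi_div_two, sin_pi_div_three, cos_pi_div_three, mul_one, hk] at hsector
  have harc : ∫ x in p..k, min x √(2 - 3 * x ^ 2) = √3 * π / 18 - 1 / 4 := by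
    rw [integral_congr (g := fun x => √3 * √(2 / 3 - x ^ 2)), intervalIntegral.integral_const_mul,
      hsector]
    · linear_combination (-1 / 12 : ℝ) * h3
    intro x hx
    rw [uIcc_of_le hpk] at hx
    have hx2 : 1 / 2 ≤ x ^ 2 := hp ▸ pow_le_pow_left₀ hp0 hx.1 2
    dsimp only
    rw [min_eq_right (Real.sqrt_le_iff.mpr ⟨hp0.trans hx.1, by linarith⟩),
      ← Real.sqrt_mul (by norm_num)]
    ring_nf
  have hcont : Continuous fun x : ℝ => min x √(2 - 3 * x ^ 2) := by fun_prop
  rw [← integral_add_adjacent_intervals (hcont.intervalIntegrable 0 p)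
    (hcont.intervalIntegrable p k), htriangle, harc]
  ring

theorem integral_sqrt_two_mul_sub_three_mul_sq :
    ∫ u in (0 : ℝ)..2 / 3, √(2 * u - 3 * u ^ 2) = √3 * π / 18 := by
  have hellipse : ∀ u : ℝ, √(2 * u - 3 * u ^ 2) = √3 * √((1 / 3) ^ 2 - (u - 1 / 3) ^ 2) := by
    intro u
    rw [← Real.sqrt_mul (by norm_num)]
    ring_nf
  have hdisc := integral_sqrt_sq_sub_sq (r := 1 / 3) (by norm_num) (α := -(π / 2)) (β := π / 2)
    ⟨le_rfl, by linarith [pi_pos]⟩ ⟨by linarith [pi_pos], le_rfl⟩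
  simp only [hellipse, intervalIntegral.integral_const_mul,
    integral_comp_sub_right (fun t => √((1 / 3) ^ 2 - t ^ 2))]
  norm_num at hdisc ⊢
  rw [hdisc]
  ring

namespace SqrtStickBreaking

def triangleRegion : Set (ℝ × ℝ) :=
  {p | 0 < p.1 ∧ 0 < p.2 ∧
    |p.1 - p.2| < √(1 - p.1 ^ 2 - p.2 ^ 2) ∧ √(1 - p.1 ^ 2 - p.2 ^ 2) < p.1 + p.2}

def sqrtTriangleRegion : Set (ℝ × ℝ) :=
  {q | (0 < q.1 ∧ 0 < q.2 ∧ q.1 + q.2 < 1) ∧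
    |√q.1 - √q.2| < √(1 - q.1 - q.2) ∧ √(1 - q.1 - q.2) < √q.1 + √q.2}

def openSimplex : Set (ℝ × ℝ) :=
  {q | 0 < q.1 ∧ 0 < q.2 ∧ q.1 + q.2 < 1}

theorem triangleRegion_eq_regionBetween :
    triangleRegion
      = regionBetween (fun x => max ((x - √(2 - 3 * x ^ 2)) / 2) ((√(2 - 3 * x ^ 2) - x) / 2))
          (fun x => (x + √(2 - 3 * x ^ 2)) / 2) (Ioo 0 √(2 / 3)) := by
  ext ⟨x, y⟩
  simp only [triangleRegion, regionBetween, mem_ofPred_eq, mem_Ioo, max_lt_iff]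
  constructor
  · rintro ⟨hx, hy, htri⟩
    rw [abs_sub_lt_sqrt_and_sqrt_lt_add_iff (by positivity)] at htri
    have hlo : (2 * y - x) ^ 2 < 2 - 3 * x ^ 2 := by nlinarith
    have hup : √(2 - 3 * x ^ 2) < 2 * y + x :=
      (Real.sqrt_lt' (by positivity)).mpr (by nlinarith)
    have hx' : x < √(2 / 3) := (Real.lt_sqrt hx.le).mpr (by nlinarith)
    rw [sq_two_mul_sub_lt_iff] at hlo
    exact ⟨⟨hx, hx'⟩, ⟨hlo.1, by linarith⟩, hlo.2⟩
  · rintro ⟨⟨hx, -⟩, ⟨hlo₁, hlo₂⟩, hup⟩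
    have hy : 0 < y := by linarith
    have hlo : (2 * y - x) ^ 2 < 2 - 3 * x ^ 2 := sq_two_mul_sub_lt_iff.mpr ⟨hlo₁, hup⟩
    have hup' : 2 - 3 * x ^ 2 < (2 * y + x) ^ 2 :=
      (Real.sqrt_lt' (by positivity)).mp (by linarith)
    exact ⟨hx, hy, (abs_sub_lt_sqrt_and_sqrt_lt_add_iff (by positivity)).mpr
      ⟨by nlinarith, by nlinarith⟩⟩

theorem volume_triangleRegion : volume triangleRegion = ENNReal.ofReal (√3 * π / 18) := by
  rw [triangleRegion_eq_regionBetween, volume_regionBetween_Ioo (Real.sqrt_nonneg _),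
    ← integral_min_id_sqrt_two_sub_three_mul_sq]
  · congr 2 with x
    rcases le_total x √(2 - 3 * x ^ 2) with h | h
    · rw [min_eq_left h, max_eq_right (by linarith)]; ring
    · rw [min_eq_right h, max_eq_left (by linarith)]; ring
  · exact Continuous.intervalIntegrable (by fun_prop) _ _
  · exact Continuous.intervalIntegrable (by fun_prop) _ _
  · intro x hx
    have := Real.sqrt_nonneg (2 - 3 * x ^ 2)
    exact max_le (by linarith) (by linarith [hx.1])

theorem sqrtTriangleRegion_eq_regionBetween :
    sqrtTriangleRegion
      = regionBetween (fun u => (1 - u - √(2 * u - 3 * u ^ 2)) / 2)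
          (fun u => (1 - u + √(2 * u - 3 * u ^ 2)) / 2) (Ioo 0 (2 / 3)) := by
  ext ⟨u, v⟩
  simp only [sqrtTriangleRegion, regionBetween, mem_ofPred_eq, mem_Ioo]
  constructor
  · rintro ⟨⟨hu, hv, -⟩, htri⟩
    rw [abs_sub_lt_sqrt_and_sqrt_lt_add_iff (by positivity),
      sub_sq_lt_and_lt_add_sq_iff (by positivity), mul_pow, mul_pow,
      Real.sq_sqrt hu.le, Real.sq_sqrt hv.le] at htri
    have hslice : (2 * v - (1 - u)) ^ 2 < 2 * u - 3 * u ^ 2 := by nlinarith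
    have hu' : u < 2 / 3 := by nlinarith
    exact ⟨⟨hu, hu'⟩, sq_two_mul_sub_lt_iff.mp hslice⟩
  · rintro ⟨⟨hu, -⟩, hlo, hup⟩
    have hslice : (2 * v - (1 - u)) ^ 2 < 2 * u - 3 * u ^ 2 := sq_two_mul_sub_lt_iff.mpr ⟨hlo, hup⟩
    have hwidth : √(2 * u - 3 * u ^ 2) ≤ 1 - u :=
      Real.sqrt_le_iff.mpr ⟨by nlinarith, by nlinarith [sq_nonneg (2 * u - 1)]⟩
    have hv : 0 < v := by linarith
    refine ⟨⟨hu, hv, by linarith⟩, ?_⟩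
    rw [abs_sub_lt_sqrt_and_sqrt_lt_add_iff (by positivity),
      sub_sq_lt_and_lt_add_sq_iff (by positivity), mul_pow, mul_pow,
      Real.sq_sqrt hu.le, Real.sq_sqrt hv.le]
    nlinarith

theorem volume_sqrtTriangleRegion :
    volume sqrtTriangleRegion = ENNReal.ofReal (√3 * π / 18) := by
  rw [sqrtTriangleRegion_eq_regionBetween, volume_regionBetween_Ioo (by norm_num),
    ← integral_sqrt_two_mul_sub_three_mul_sq]
  · congr 2 with u
    ring
  · exact Continuous.intervalIntegrable (by fun_prop) _ _
  · exact Continuous.intervalIntegrable (by fun_prop) _ _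
  · exact fun u _ => by linarith [Real.sqrt_nonneg (2 * u - 3 * u ^ 2)]

theorem openSimplex_eq_regionBetween :
    openSimplex = regionBetween (fun _ => 0) (fun u => 1 - u) (Ioo 0 1) := by
  ext ⟨u, v⟩
  simp only [openSimplex, regionBetween, mem_ofPred_eq, mem_Ioo]
  constructor
  · rintro ⟨hu, hv, huv⟩
    exact ⟨⟨hu, by linarith⟩, hv, by linarith⟩
  · rintro ⟨⟨hu, -⟩, hv, huv⟩
    exact ⟨hu, hv, by linarith⟩

theorem volume_openSimplex : volume openSimplex = ENNReal.ofReal (1 / 2) := by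
  rw [openSimplex_eq_regionBetween, volume_regionBetween_Ioo zero_le_one intervalIntegrable_const
    ((by fun_prop : Continuous fun u : ℝ => 1 - u).intervalIntegrable 0 1)
    fun u hu => sub_nonneg.mpr hu.2.le]
  norm_num [integral_comp_sub_left (fun x => x), integral_id]

end SqrtStickBreaking

open SqrtStickBreaking

/-- The region `{|x-y| < √(1-x²-y²) < x+y}` has area `√3·π/18`; consequently, for
`(u,v)` uniform on the simplex, the pieces `√u, √v, √(1-u-v)` satisfy the triangle
inequalities with probability `√3·π/9`. -/
theorem sqrt_stick_breaking_triangle_prob :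
    volume {p : ℝ × ℝ | 0 < p.1 ∧ 0 < p.2 ∧
        |p.1 - p.2| < Real.sqrt (1 - p.1 ^ 2 - p.2 ^ 2) ∧
        Real.sqrt (1 - p.1 ^ 2 - p.2 ^ 2) < p.1 + p.2}
      = ENNReal.ofReal (Real.sqrt 3 * π / 18) ∧
    volume {q : ℝ × ℝ | (0 < q.1 ∧ 0 < q.2 ∧ q.1 + q.2 < 1) ∧
        |Real.sqrt q.1 - Real.sqrt q.2| < Real.sqrt (1 - q.1 - q.2) ∧
        Real.sqrt (1 - q.1 - q.2) < Real.sqrt q.1 + Real.sqrt q.2} /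
      volume {q : ℝ × ℝ | 0 < q.1 ∧ 0 < q.2 ∧ q.1 + q.2 < 1}
      = ENNReal.ofReal (Real.sqrt 3 * π / 9) := by
  refine ⟨volume_triangleRegion, ?_⟩
  change volume sqrtTriangleRegion / volume openSimplex = _
  rw [volume_sqrtTriangleRegion, volume_openSimplex, ← ENNReal.ofReal_div_of_pos (by norm_num)]
  ring_nf
end

section
/- For the density f(a) = (12√3/π)·a²·√(2-3a²) on (0, √6/3) (0 elsewhere): ∫ f = 1, ∫ a·f(a) da = 32√6/(45π), and ∫ a²·f(a) da = 1/3. -/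
/-!
Scaling `a = √(2/3) · x` turns `√(2 - 3a²)` into `√2 · √(1 - x²)`, so every moment of the density
is a multiple of `J n = ∫₀¹ xⁿ √(1 - x²) dx`. Integrating by parts against
`d/dx (1 - x²)^{3/2} = -3x √(1 - x²)` gives `J (n + 2) = (n + 1)/(n + 4) · J n`, and
`J 0 = π/4` (a quarter disc), `J 1 = 1/3`.
-/

open MeasureTheory Real intervalIntegral

lemma hasDerivAt_one_sub_sq_mul_sqrt {x : ℝ} (hx : x ^ 2 < 1) :
    HasDerivAt (fun x : ℝ => (1 - x ^ 2) * √(1 - x ^ 2)) (-3 * x * √(1 - x ^ 2)) x := by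
  have hpos : 0 < 1 - x ^ 2 := by linarith
  have hinner : HasDerivAt (fun x : ℝ => 1 - x ^ 2) (-2 * x) x := by
    simpa using (hasDerivAt_pow 2 x).const_sub 1
  refine (hinner.mul (hinner.sqrt hpos.ne')).congr_deriv ?_
  field_simp
  rw [sq_sqrt hpos.le]
  ring

lemma integral_zero_one_sqrt_one_sub_sq : ∫ x in (0 : ℝ)..1, √(1 - x ^ 2) = π / 4 := by
  have hcont : Continuous fun x : ℝ => √(1 - x ^ 2) := by fun_prop
  have hsymm : ∫ x in (-1 : ℝ)..0, √(1 - x ^ 2) = ∫ x in (0 : ℝ)..1, √(1 - x ^ 2) := by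
    have h := integral_comp_neg (a := (0 : ℝ)) (b := 1) fun x => √(1 - x ^ 2)
    simp only [neg_sq, neg_zero] at h
    exact h.symm
  have hsplit := integral_add_adjacent_intervals (hcont.intervalIntegrable (μ := volume) (-1) 0)
    (hcont.intervalIntegrable 0 1)
  rw [integral_sqrt_one_sub_sq, hsymm] at hsplit
  linarith

lemma integral_zero_one_mul_sqrt_one_sub_sq : ∫ x in (0 : ℝ)..1, x * √(1 - x ^ 2) = 1 / 3 := by
  have h := integral_eq_sub_of_hasDerivAt_of_le zero_le_one (by fun_prop)
    (fun x hx => hasDerivAt_one_sub_sq_mul_sqrt (x := x) (by nlinarith [hx.1, hx.2]))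
    ((by fun_prop : Continuous fun x : ℝ => -3 * x * √(1 - x ^ 2)).intervalIntegrable 0 1)
  simp only [mul_assoc, intervalIntegral.integral_const_mul] at h
  norm_num at h
  linarith

lemma integral_zero_one_pow_add_two_mul_sqrt_one_sub_sq (n : ℕ) :
    ∫ x in (0 : ℝ)..1, x ^ (n + 2) * √(1 - x ^ 2) =
      (n + 1) / (n + 4) * ∫ x in (0 : ℝ)..1, x ^ n * √(1 - x ^ 2) := by
  set J : ℕ → ℝ := fun k => ∫ x in (0 : ℝ)..1, x ^ k * √(1 - x ^ 2)
  have hint (k : ℕ) : IntervalIntegrable (fun x : ℝ => x ^ k * √(1 - x ^ 2)) volume 0 1 :=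
    (by fun_prop : Continuous _).intervalIntegrable _ _
  have hparts := integral_mul_deriv_eq_deriv_mul_of_hasDerivAt
    (u := fun x : ℝ => x ^ (n + 1)) (u' := fun x => (n + 1 : ℕ) * x ^ n)
    (v := fun x : ℝ => -((1 - x ^ 2) * √(1 - x ^ 2)) / 3) (v' := fun x => x * √(1 - x ^ 2))
    (a := 0) (b := 1) (by fun_prop) (by fun_prop)
    (fun x _ => by simpa using hasDerivAt_pow (n + 1) x)
    (fun x hx => by
      simp only [zero_le_one, min_eq_left, max_eq_right, Set.mem_Ioo] at hx
      refine ((hasDerivAt_one_sub_sq_mul_sqrt (by nlinarith)).neg.div_const 3).congr_deriv ?_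
      ring)
    ((by fun_prop : Continuous fun x : ℝ => ((n + 1 : ℕ) : ℝ) * x ^ n).intervalIntegrable 0 1)
    ((by fun_prop : Continuous fun x : ℝ => x * √(1 - x ^ 2)).intervalIntegrable 0 1)
  have hlhs : ∫ x in (0 : ℝ)..1, x ^ (n + 1) * (x * √(1 - x ^ 2)) = J (n + 2) := by
    congr 1 with x
    ring
  -- `(1 - x²) √(1 - x²) = √(1 - x²) - x² √(1 - x²)` brings `J (n + 2)` back on the right.
  have hrhs : ∫ x in (0 : ℝ)..1, ((n + 1 : ℕ) * x ^ n) * (-((1 - x ^ 2) * √(1 - x ^ 2)) / 3)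
      = -((n + 1) / 3) * (J n - J (n + 2)) := by
    rw [← integral_sub (hint n) (hint (n + 2)), ← intervalIntegral.integral_const_mul]
    congr 1 with x
    push_cast
    ring
  rw [hlhs, hrhs] at hparts
  norm_num at hparts
  change J (n + 2) = (n + 1) / (n + 4) * J n
  field_simp
  linear_combination (3 : ℝ) * hparts

lemma integral_zero_one_sq_mul_sqrt_one_sub_sq :
    ∫ x in (0 : ℝ)..1, x ^ 2 * √(1 - x ^ 2) = π / 16 := by
  rw [integral_zero_one_pow_add_two_mul_sqrt_one_sub_sq 0]
  simp only [pow_zero, one_mul, integral_zero_one_sqrt_one_sub_sq]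
  ring

lemma integral_zero_one_pow_three_mul_sqrt_one_sub_sq :
    ∫ x in (0 : ℝ)..1, x ^ 3 * √(1 - x ^ 2) = 2 / 15 := by
  rw [integral_zero_one_pow_add_two_mul_sqrt_one_sub_sq 1]
  simp only [pow_one, integral_zero_one_mul_sqrt_one_sub_sq]
  norm_num

lemma integral_zero_one_pow_four_mul_sqrt_one_sub_sq :
    ∫ x in (0 : ℝ)..1, x ^ 4 * √(1 - x ^ 2) = π / 32 := by
  rw [integral_zero_one_pow_add_two_mul_sqrt_one_sub_sq 2,
    integral_zero_one_sq_mul_sqrt_one_sub_sq]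
  ring

lemma integral_pow_mul_sqrt_sq_sub_sq (n : ℕ) {r : ℝ} (hr : 0 ≤ r) :
    ∫ x in (0 : ℝ)..r, x ^ n * √(r ^ 2 - x ^ 2) =
      r ^ (n + 2) * ∫ x in (0 : ℝ)..1, x ^ n * √(1 - x ^ 2) := by
  have h := smul_integral_comp_mul_left (a := 0) (b := 1) (fun x => x ^ n * √(r ^ 2 - x ^ 2)) r
  simp only [mul_zero, mul_one, smul_eq_mul] at h
  rw [← h, ← intervalIntegral.integral_const_mul, ← intervalIntegral.integral_const_mul]
  congr 1 with x
  rw [mul_pow, mul_pow, ← mul_one_sub, sqrt_mul (sq_nonneg r), sqrt_sq hr]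
  ring

lemma sq_sqrt_six_div_three : (√6 / 3) ^ 2 = 2 / 3 := by
  rw [div_pow, sq_sqrt (by norm_num)]
  norm_num

lemma integral_pow_mul_sqrt_two_sub_three_mul_sq (n : ℕ) :
    ∫ a in (0 : ℝ)..(√6 / 3), a ^ n * √(2 - 3 * a ^ 2) =
      √3 * (√6 / 3) ^ (n + 2) * ∫ x in (0 : ℝ)..1, x ^ n * √(1 - x ^ 2) := by
  rw [mul_assoc, ← integral_pow_mul_sqrt_sq_sub_sq n (by positivity),
    ← intervalIntegral.integral_const_mul]
  congr 1 with a
  rw [mul_left_comm, ← sqrt_mul (by norm_num), sq_sqrt_six_div_three]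
  ring_nf

lemma integral_pow_mul_side_density (k : ℕ) :
    ∫ a in (0 : ℝ)..(√6 / 3), a ^ k * ((12 * √3 / π) * a ^ 2 * √(2 - 3 * a ^ 2)) =
      16 / π * (√6 / 3) ^ k * ∫ x in (0 : ℝ)..1, x ^ (k + 2) * √(1 - x ^ 2) := by
  set J := ∫ x in (0 : ℝ)..1, x ^ (k + 2) * √(1 - x ^ 2)
  calc _ = 12 * √3 / π * ∫ a in (0 : ℝ)..(√6 / 3), a ^ (k + 2) * √(2 - 3 * a ^ 2) := by
        rw [← intervalIntegral.integral_const_mul]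
        congr 1 with a
        ring
    _ = 12 * √3 / π * (√3 * ((√6 / 3) ^ k * (2 / 3) * (2 / 3)) * J) := by
        rw [integral_pow_mul_sqrt_two_sub_three_mul_sq, pow_add, pow_add, sq_sqrt_six_div_three]
    _ = 12 * (√3 * √3) * 4 / 9 / π * (√6 / 3) ^ k * J := by ring
    _ = 16 / π * (√6 / 3) ^ k * J := by
        rw [mul_self_sqrt (by norm_num)]
        ring

/-- The side density `f(a) = (12√3/π)·a²·√(2-3a²)` on `(0, √6/3)` integrates to 1,
with mean `32√6/(45π)` and second moment `1/3`. -/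
theorem side_density_sum_squares_moments :
    (∫ a in (0:ℝ)..(Real.sqrt 6 / 3),
        (12 * Real.sqrt 3 / π) * a ^ 2 * Real.sqrt (2 - 3 * a ^ 2)) = 1 ∧
    (∫ a in (0:ℝ)..(Real.sqrt 6 / 3),
        a * ((12 * Real.sqrt 3 / π) * a ^ 2 * Real.sqrt (2 - 3 * a ^ 2)))
      = 32 * Real.sqrt 6 / (45 * π) ∧
    (∫ a in (0:ℝ)..(Real.sqrt 6 / 3),
        a ^ 2 * ((12 * Real.sqrt 3 / π) * a ^ 2 * Real.sqrt (2 - 3 * a ^ 2)))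
      = 1/3 := by
  have hπ : π ≠ 0 := pi_ne_zero
  refine ⟨?_, ?_, ?_⟩
  · have h := integral_pow_mul_side_density 0
    simp only [pow_zero, one_mul, mul_one] at h
    rw [h, integral_zero_one_sq_mul_sqrt_one_sub_sq]
    field_simp
  · have h := integral_pow_mul_side_density 1
    simp only [pow_one] at h
    rw [h, integral_zero_one_pow_three_mul_sqrt_one_sub_sq]
    field_simp
    ring
  · rw [integral_pow_mul_side_density 2, integral_zero_one_pow_four_mul_sqrt_one_sub_sq,
      sq_sqrt_six_div_three]
    field_simp
    ring
end

section
/- The integral over the triangle {(x,y) : 0<x<π, 0<y<π, x+y<π} of (1/π)·sin(x+y)/(sin(x)+sin(y))² equals 1. -/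
/-!
Substitute `z = x + y` (a measure-preserving shear). On the slice of fixed `z ∈ (0, π)`,
`y ↦ sin y / (sin (z - y) + sin y)` is an antiderivative of `sin z / (sin (z - y) + sin y) ^ 2`,
because the numerator of its derivative is `cos y sin (z - y) + sin y cos (z - y) = sin z`;
it rises from `0` to `1` as `y` runs from `0` to `z`. So every slice contributes `1 / π`,
and the slices fill an interval of length `π`.
-/

open MeasureTheory Real Set

section RegionBetween

variable {α : Type*} {f g : α → ℝ} {s : Set α} {F : α × ℝ → ℝ}

lemma indicator_regionBetween_apply (x : α) (y : ℝ) :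
    (regionBetween f g s).indicator F (x, y)
      = s.indicator (fun x => (Ioo (f x) (g x)).indicator (fun y => F (x, y)) y) x := by
  by_cases hx : x ∈ s <;> simp [regionBetween, indicator, hx]

theorem setIntegral_regionBetween_of_nonneg [MeasurableSpace α] {μ : Measure α} [SFinite μ]
    (hf : Measurable f) (hg : Measurable g)
    (hs : MeasurableSet s) (hF : Measurable F)
    (hF_nonneg : ∀ p ∈ regionBetween f g s, 0 ≤ F p)
    (hF_slice : ∀ x ∈ s, IntegrableOn (fun y => F (x, y)) (Ioo (f x) (g x)))
    (hF_iter : IntegrableOn (fun x => ∫ y in Ioo (f x) (g x), F (x, y)) s μ) :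
    ∫ p in regionBetween f g s, F p ∂μ.prod volume
      = ∫ x in s, (∫ y in Ioo (f x) (g x), F (x, y)) ∂μ := by
  have hR := measurableSet_regionBetween hf hg hs
  have h_iter : ∀ x : α, ∫ y : ℝ, (regionBetween f g s).indicator F (x, y)
      = s.indicator (fun x => ∫ y in Ioo (f x) (g x), F (x, y)) x := by
    intro x
    by_cases hx : x ∈ s <;>
      simp [indicator_regionBetween_apply, hx, integral_indicator measurableSet_Ioo]
  have h_int : Integrable ((regionBetween f g s).indicator F) (μ.prod volume) := by
    rw [integrable_prod_iff (hF.indicator hR).aestronglyMeasurable]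
    refine ⟨ae_of_all _ fun x => ?_, ?_⟩
    · by_cases hx : x ∈ s <;>
        simp [indicator_regionBetween_apply, hx, integrable_indicator_iff measurableSet_Ioo,
          hF_slice]
    · have h_norm : ∀ p, ‖(regionBetween f g s).indicator F p‖
          = (regionBetween f g s).indicator F p :=
        fun p => norm_of_nonneg (indicator_nonneg hF_nonneg p)
      simpa only [h_norm, h_iter] using (integrable_indicator_iff hs).2 hF_iter
  rw [← integral_indicator hR, integral_prod _ h_int]
  simp only [h_iter]
  exact integral_indicator hs

end RegionBetween

lemma hasDerivAt_sin_div_sin_sub_add_sin {z y : ℝ} (h : sin (z - y) + sin y ≠ 0) :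
    HasDerivAt (fun y => sin y / (sin (z - y) + sin y))
      (sin z / (sin (z - y) + sin y) ^ 2) y := by
  have h_denom : HasDerivAt (fun y => sin (z - y) + sin y) (-cos (z - y) + cos y) y := by
    simpa using ((hasDerivAt_id y).const_sub z).sin.fun_add (hasDerivAt_sin y)
  refine ((hasDerivAt_sin y).div h_denom h).congr_deriv ?_
  rw [show z = (z - y) + y by ring, sin_add, add_sub_cancel_right]
  ring

lemma sin_sub_add_sin_pos {z y : ℝ} (hz : 0 < z) (hzπ : z < π) (hy : y ∈ Icc 0 z) :
    0 < sin (z - y) + sin y := by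
  obtain ⟨hy0, hyz⟩ := hy
  rcases hy0.eq_or_lt with rfl | hy0
  · simpa using sin_pos_of_pos_of_lt_pi hz hzπ
  · exact add_pos_of_nonneg_of_pos (sin_nonneg_of_nonneg_of_le_pi (by linarith) (by linarith))
      (sin_pos_of_pos_of_lt_pi hy0 (by linarith))

lemma continuousOn_sin_div_sq_sin_sub_add_sin {z : ℝ} (hz : 0 < z) (hzπ : z < π) :
    ContinuousOn (fun y => sin z / (sin (z - y) + sin y) ^ 2) (Icc 0 z) :=
  continuousOn_const.div (by fun_prop) fun _ hy => (pow_pos (sin_sub_add_sin_pos hz hzπ hy) 2).ne'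

theorem integral_sin_div_sq_sin_sub_add_sin {z : ℝ} (hz : 0 < z) (hzπ : z < π) :
    ∫ y in (0 : ℝ)..z, sin z / (sin (z - y) + sin y) ^ 2 = 1 := by
  have h_deriv : ∀ y ∈ uIcc 0 z, HasDerivAt (fun y => sin y / (sin (z - y) + sin y))
      (sin z / (sin (z - y) + sin y) ^ 2) y := fun y hy =>
    hasDerivAt_sin_div_sin_sub_add_sin
      (sin_sub_add_sin_pos hz hzπ (uIcc_of_le hz.le ▸ hy)).ne'
  have h_int : IntervalIntegrable (fun y => sin z / (sin (z - y) + sin y) ^ 2) volume 0 z :=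
    (continuousOn_sin_div_sq_sin_sub_add_sin hz hzπ).intervalIntegrable_of_Icc hz.le
  rw [intervalIntegral.integral_eq_sub_of_hasDerivAt h_deriv h_int]
  simp [(sin_pos_of_pos_of_lt_pi hz hzπ).ne']

lemma setIntegral_Ioo_sin_div_sq_sin_sub_add_sin {z : ℝ} (hz : 0 < z) (hzπ : z < π) :
    ∫ y in Ioo 0 z, sin z / (sin (z - y) + sin y) ^ 2 = 1 := by
  rw [← integral_Ioc_eq_integral_Ioo, ← intervalIntegral.integral_of_le hz.le,
    integral_sin_div_sq_sin_sub_add_sin hz hzπ]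

lemma setIntegral_regionBetween_sin_div_sq_sin_sub_add_sin :
    ∫ q in regionBetween (fun _ => 0) id (Ioo 0 π),
      sin q.1 / (sin (q.1 - q.2) + sin q.2) ^ 2 = π := by
  have h_slice : ∀ z ∈ Ioo 0 π, ∫ y in Ioo 0 z, sin z / (sin (z - y) + sin y) ^ 2 = 1 :=
    fun z hz => setIntegral_Ioo_sin_div_sq_sin_sub_add_sin hz.1 hz.2
  have h_nonneg : ∀ q ∈ regionBetween (fun _ => 0) id (Ioo 0 π),
      0 ≤ sin q.1 / (sin (q.1 - q.2) + sin q.2) ^ 2 := fun q hq =>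
    div_nonneg (sin_nonneg_of_nonneg_of_le_pi hq.1.1.le hq.1.2.le) (sq_nonneg _)
  have h_slice_int : ∀ z ∈ Ioo 0 π,
      IntegrableOn (fun y => sin z / (sin (z - y) + sin y) ^ 2) (Ioo 0 z) := fun z hz =>
    (continuousOn_sin_div_sq_sin_sub_add_sin hz.1 hz.2).integrableOn_Icc.mono_set
      Ioo_subset_Icc_self
  have h_iter_int : IntegrableOn (fun z => ∫ y in Ioo 0 z, sin z / (sin (z - y) + sin y) ^ 2)
      (Ioo 0 π) :=
    (integrableOn_const measure_Ioo_lt_top.ne).congr_fun (fun z hz => (h_slice z hz).symm)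
      measurableSet_Ioo
  rw [Measure.volume_eq_prod, setIntegral_regionBetween_of_nonneg measurable_const
    measurable_id measurableSet_Ioo (by fun_prop) h_nonneg h_slice_int h_iter_int]
  simp only [id]
  rw [setIntegral_congr_fun measurableSet_Ioo h_slice]
  simp [pi_pos.le]

lemma setIntegral_triangle_comp_add_prod (c : ℝ) (G : ℝ × ℝ → ℝ) :
    ∫ p in {p : ℝ × ℝ | 0 < p.1 ∧ p.1 < c ∧ 0 < p.2 ∧ p.2 < c ∧ p.1 + p.2 < c},
        G (p.1 + p.2, p.2)
      = ∫ q in regionBetween (fun _ => 0) id (Ioo 0 c), G q := by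
  have h_shear : MeasurePreserving (fun p : ℝ × ℝ => (p.1 + p.2, p.2)) :=
    measurePreserving_add_prod volume volume
  have h_emb : MeasurableEmbedding (fun p : ℝ × ℝ => (p.1 + p.2, p.2)) :=
    (by fun_prop : Continuous _).measurableEmbedding fun p q h => by
      simp only [Prod.mk.injEq] at h
      ext <;> linarith
  have h_region : {p : ℝ × ℝ | 0 < p.1 ∧ p.1 < c ∧ 0 < p.2 ∧ p.2 < c ∧ p.1 + p.2 < c}
      = (fun p : ℝ × ℝ => (p.1 + p.2, p.2)) ⁻¹'
          regionBetween (fun _ => 0) id (Ioo 0 c) := by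
    ext p
    simp only [mem_ofPred_eq, mem_preimage, regionBetween, mem_Ioo, id]
    constructor
    · rintro ⟨h1, -, h2, -, h3⟩
      exact ⟨⟨by linarith, h3⟩, h2, by linarith⟩
    · rintro ⟨⟨-, h1⟩, h2, h3⟩
      exact ⟨by linarith, by linarith, h2, by linarith, h1⟩
  rw [h_region, h_shear.setIntegral_preimage_emb h_emb]

/-- The bivariate angle density for triangles with `a + b = 1` and uniform
included angle `γ` integrates to 1. -/
theorem angle_density_a_plus_b_integrates_to_one :
    ∫ p in {p : ℝ × ℝ | 0 < p.1 ∧ p.1 < π ∧ 0 < p.2 ∧ p.2 < π ∧ p.1 + p.2 < π},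
      (1 / π) * sin (p.1 + p.2) / (sin p.1 + sin p.2) ^ 2 = 1 := by
  have h_cov := setIntegral_triangle_comp_add_prod π
    (fun q => sin q.1 / (sin (q.1 - q.2) + sin q.2) ^ 2)
  simp only [add_sub_cancel_right] at h_cov
  simp_rw [mul_div_assoc]
  rw [integral_const_mul, h_cov, setIntegral_regionBetween_sin_div_sq_sin_sub_add_sin]
  field_simp [pi_pos.ne']
end

section
/- The univariate density of c = √(a²+(1-a)²-2a(1-a)cos γ), where a is uniform on (0,1) and γ is independently uniform on (0,π), is f(c) = c/√(1-c²) for 0<c<1; that is, integrating the bivariate density (2/π)·y/(√(1-y²)·√(4x(1-x)-(1-y²))) over x with |2x-1|<y gives y/√(1-y²). -/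
open MeasureTheory Real intervalIntegral Set

lemma meas_aux : Measurable (fun u : ℝ => 1 / Real.sqrt (1 - u ^ 2)) :=
  measurable_const.div ((Real.continuous_sqrt.comp (by continuity)).measurable)

lemma bnd_aux : ∀ x ∈ Icc (-1:ℝ) 1,
    ‖1 / Real.sqrt (1 - x ^ 2)‖ ≤ (1 - x) ^ (-(1/2) : ℝ) + (1 + x) ^ (-(1/2) : ℝ) := by
  intro x ⟨hx1, hx2⟩
  have h1x : (0:ℝ) ≤ 1 - x := by linarith
  have h1x' : (0:ℝ) ≤ 1 + x := by linarith
  rw [Real.norm_eq_abs, abs_of_nonneg (by positivity)]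
  rcases le_or_gt x 0 with hx0 | hx0
  · have key : 1 / Real.sqrt (1 - x ^ 2) ≤ (1 + x) ^ (-(1/2) : ℝ) := by
      rcases eq_or_lt_of_le h1x' with h | h
      · rw [← h]
        simp [Real.zero_rpow, show (1:ℝ) - x^2 = 0 by nlinarith]
      · rw [Real.rpow_neg h1x', ← Real.sqrt_eq_rpow, ← one_div]
        apply one_div_le_one_div_of_le (Real.sqrt_pos.mpr h)
        apply Real.sqrt_le_sqrt
        nlinarith
    have : (0:ℝ) ≤ (1 - x) ^ (-(1/2) : ℝ) := Real.rpow_nonneg h1x _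
    linarith
  · have key : 1 / Real.sqrt (1 - x ^ 2) ≤ (1 - x) ^ (-(1/2) : ℝ) := by
      rcases eq_or_lt_of_le h1x with h | h
      · rw [← h]
        simp [Real.zero_rpow, show (1:ℝ) - x^2 = 0 by nlinarith]
      · rw [Real.rpow_neg h1x, ← Real.sqrt_eq_rpow, ← one_div]
        apply one_div_le_one_div_of_le (Real.sqrt_pos.mpr h)
        apply Real.sqrt_le_sqrt
        nlinarith
    have : (0:ℝ) ≤ (1 + x) ^ (-(1/2) : ℝ) := Real.rpow_nonneg h1x' _
    linarith

lemma integrable_arcsin_deriv :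
    IntervalIntegrable (fun u : ℝ => 1 / Real.sqrt (1 - u ^ 2)) volume (-1) 1 := by
  have h1 : IntervalIntegrable (fun u : ℝ => (1 - u) ^ (-(1/2) : ℝ)) volume (-1) 1 := by
    have := (intervalIntegrable_rpow' (a := 0) (b := 2) (r := -(1/2)) (by norm_num)).comp_sub_left 1
    simpa [show (1:ℝ)-2 = -1 by norm_num] using this.symm
  have h2 : IntervalIntegrable (fun u : ℝ => (1 + u) ^ (-(1/2) : ℝ)) volume (-1) 1 := by
    have := (intervalIntegrable_rpow' (a := 0) (b := 2) (r := -(1/2)) (by norm_num)).comp_add_right 1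
    simpa [add_comm, show (2:ℝ)-1 = 1 by norm_num] using this
  refine (h1.add h2).mono_fun meas_aux.aestronglyMeasurable ?_
  rw [uIoc_of_le (by norm_num : (-1:ℝ) ≤ 1)]
  refine (ae_restrict_iff' measurableSet_Ioc).mpr (Filter.Eventually.of_forall ?_)
  intro x hx
  have h := bnd_aux x (Ioc_subset_Icc_self hx)
  calc ‖1 / Real.sqrt (1 - x ^ 2)‖ ≤ (1 - x) ^ (-(1/2) : ℝ) + (1 + x) ^ (-(1/2) : ℝ) := h
    _ ≤ ‖(1 - x) ^ (-(1/2) : ℝ) + (1 + x) ^ (-(1/2) : ℝ)‖ := le_abs_self _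

lemma integral_arcsin_deriv :
    ∫ u in (-1:ℝ)..1, 1 / Real.sqrt (1 - u ^ 2) = π := by
  have := intervalIntegral.integral_eq_sub_of_hasDeriv_right
    (f := Real.arcsin) (f' := fun u : ℝ => 1 / Real.sqrt (1 - u ^ 2)) (a := (-1:ℝ)) (b := 1)
    (Real.continuous_arcsin.continuousOn) ?_ integrable_arcsin_deriv
  · rw [this, Real.arcsin_one, Real.arcsin_neg_one]; ring
  · intro x hx
    rw [min_eq_left (by norm_num), max_eq_right (by norm_num)] at hx
    exact (Real.hasDerivAt_arcsin (ne_of_gt hx.1) (ne_of_lt hx.2)).hasDerivWithinAt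

/-- Marginalizing the bivariate side density over `a` gives the density
`c/√(1-c²)` of the third side. -/
theorem marginal_density_third_side (c : ℝ) (hc0 : 0 < c) (hc1 : c < 1) :
    (∫ a in ((1 - c)/2)..((1 + c)/2),
        (2 / π) * c / (Real.sqrt (1 - c ^ 2) *
          Real.sqrt (4 * a * (1 - a) - (1 - c ^ 2))))
      = c / Real.sqrt (1 - c ^ 2) := by
  have hs : (0:ℝ) < Real.sqrt (1 - c ^ 2) := Real.sqrt_pos.mpr (by nlinarith)
  have step1 : ∀ a : ℝ,
      (2 / π) * c / (Real.sqrt (1 - c ^ 2) * Real.sqrt (4 * a * (1 - a) - (1 - c ^ 2)))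
        = ((2 / π) * c / Real.sqrt (1 - c ^ 2)) * (1 / Real.sqrt (c ^ 2 - (2 * a + -1) ^ 2)) := by
    intro a
    rw [div_mul_div_comm, mul_one]
    congr 2
    ring_nf
  simp_rw [step1]
  rw [intervalIntegral.integral_const_mul]
  have hsub : (∫ a in ((1 - c)/2)..((1 + c)/2), 1 / Real.sqrt (c ^ 2 - (2 * a + -1) ^ 2))
      = (2:ℝ)⁻¹ • ∫ x in (-c)..c, 1 / Real.sqrt (c ^ 2 - x ^ 2) := by
    rw [intervalIntegral.integral_comp_mul_add (fun x => 1 / Real.sqrt (c ^ 2 - x ^ 2))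
      two_ne_zero (-1)]
    congr 1 <;> ring
  rw [hsub]
  have hg : ∀ x : ℝ, 1 / Real.sqrt (c ^ 2 - x ^ 2)
      = (1/c) * (1 / Real.sqrt (1 - (x / c) ^ 2)) := by
    intro x
    have h1 : c ^ 2 - x ^ 2 = c ^ 2 * (1 - (x / c) ^ 2) := by
      field_simp
    rw [h1, Real.sqrt_mul (sq_nonneg c), Real.sqrt_sq hc0.le]
    rw [div_mul_div_comm, one_mul]
  simp_rw [hg]
  rw [intervalIntegral.integral_const_mul,
    intervalIntegral.integral_comp_div (fun u => 1 / Real.sqrt (1 - u ^ 2)) hc0.ne',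
    neg_div, div_self hc0.ne', integral_arcsin_deriv]
  rw [smul_eq_mul, smul_eq_mul]
  field_simp
end
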